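/- For integers k ≥ 1 and l, the abelianization of Γ_{k,l} is isomorphic to (ℤ/kℤ) × ℤ × ℤ, where the torsion factor ℤ/kℤ is generated by the class of x, the two infinite cyclic factors are generated by the classes of y and t, and the class of z is trivial. -/

import Mathlib

namespace Stmt8

/-- The free group generators `x, y, z, t` for the `Nil⁴` group. -/
private abbrev gx : FreeGroup (Fin 4) := FreeGroup.of 0
private abbrev gy : FreeGroup (Fin 4) := FreeGroup.of 1
private abbrev gz : FreeGroup (Fin 4) := FreeGroup.of 2
private abbrev gt : FreeGroup (Fin 4) := FreeGroup.of 3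

/-- The relators of the presentation
`⟨x, y, z, t | t x t⁻¹ = x, t y t⁻¹ = xᵏ y zˡ, t z t⁻¹ = z, [x,y] = z, xz = zx, yz = zy⟩`. -/
def nilRels (k l : ℤ) : Set (FreeGroup (Fin 4)) :=
  { gt * gx * gt⁻¹ * gx⁻¹,
    gt * gy * gt⁻¹ * (gx ^ k * gy * gz ^ l)⁻¹,
    gt * gz * gt⁻¹ * gz⁻¹,
    gx * gy * gx⁻¹ * gy⁻¹ * gz⁻¹,
    gx * gz * gx⁻¹ * gz⁻¹,
    gy * gz * gy⁻¹ * gz⁻¹ }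

/-- `Γ k l`, the (finite index model of the) fundamental group of a closed `Nil⁴`-manifold. -/
abbrev Γ (k l : ℤ) : Type := PresentedGroup (nilRels k l)

/-- The images of the generators in `Γ k l`. -/
def xΓ (k l : ℤ) : Γ k l := PresentedGroup.of 0
def yΓ (k l : ℤ) : Γ k l := PresentedGroup.of 1
def zΓ (k l : ℤ) : Γ k l := PresentedGroup.of 2
def tΓ (k l : ℤ) : Γ k l := PresentedGroup.of 3

/-!
In the abelianization the relation `[x, y] = z` kills `z`, after which `t y t⁻¹ = xᵏ y zˡ`
becomes `xᵏ = 1` and the other relations become vacuous. So the abelianization is the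
commutative group on `x, y, t` subject only to `xᵏ = 1`; the inverse of the evident map to
`ℤ/k × ℤ × ℤ` comes from the universal property of that product.
-/

open Multiplicative
open scoped commutatorElement

section ZModProdIntProdInt

variable {n : ℕ}

theorem ofAdd_intCast_eq_mul_zpow (i j m : ℤ) :
    (ofAdd ((i : ZMod n), j, m) : Multiplicative (ZMod n × ℤ × ℤ)) =
      ofAdd (1, 0, 0) ^ i * ofAdd (0, 1, 0) ^ j * ofAdd (0, 0, 1) ^ m := by
  simp only [← ofAdd_zsmul, ← ofAdd_add]
  simp

theorem hom_ext_zmodProdIntProdInt {G : Type*} [Group G]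
    {f g : Multiplicative (ZMod n × ℤ × ℤ) →* G}
    (h₁ : f (ofAdd (1, 0, 0)) = g (ofAdd (1, 0, 0)))
    (h₂ : f (ofAdd (0, 1, 0)) = g (ofAdd (0, 1, 0)))
    (h₃ : f (ofAdd (0, 0, 1)) = g (ofAdd (0, 0, 1))) : f = g := by
  refine MonoidHom.ext fun ⟨a, j, m⟩ => ?_
  obtain ⟨i, rfl⟩ := ZMod.intCast_surjective a
  change f (ofAdd ((i : ZMod n), j, m)) = g (ofAdd ((i : ZMod n), j, m))
  simp only [ofAdd_intCast_eq_mul_zpow, map_mul, map_zpow, h₁, h₂, h₃]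

variable {G : Type*} [CommGroup G]

def liftZModProdIntProdInt (a b c : G) (ha : a ^ n = 1) :
    Multiplicative (ZMod n × ℤ × ℤ) →* G :=
  AddMonoidHom.toMultiplicativeLeft <|
    (ZMod.lift n ⟨zmultiplesHom _ (Additive.ofMul a), by simp [← ofMul_pow, ha]⟩).coprod
      ((zmultiplesHom _ (Additive.ofMul b)).coprod (zmultiplesHom _ (Additive.ofMul c)))

variable (a b c : G) (ha : a ^ n = 1)

theorem liftZModProdIntProdInt_ofAdd_intCast (i j m : ℤ) :
    liftZModProdIntProdInt a b c ha (ofAdd ((i : ZMod n), j, m)) = a ^ i * b ^ j * c ^ m := by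
  simp [liftZModProdIntProdInt, mul_assoc]

@[simp] theorem liftZModProdIntProdInt_ofAdd_one_zero_zero :
    liftZModProdIntProdInt a b c ha (ofAdd (1, 0, 0)) = a := by
  simpa using liftZModProdIntProdInt_ofAdd_intCast a b c ha 1 0 0

@[simp] theorem liftZModProdIntProdInt_ofAdd_zero_one_zero :
    liftZModProdIntProdInt a b c ha (ofAdd (0, 1, 0)) = b := by
  simpa using liftZModProdIntProdInt_ofAdd_intCast a b c ha 0 1 0

@[simp] theorem liftZModProdIntProdInt_ofAdd_zero_zero_one :
    liftZModProdIntProdInt a b c ha (ofAdd (0, 0, 1)) = c := by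
  simpa using liftZModProdIntProdInt_ofAdd_intCast a b c ha 0 0 1

end ZModProdIntProdInt

section Presentation

variable (k l : ℤ)

theorem tΓ_mul_yΓ_mul_inv : tΓ k l * yΓ k l * (tΓ k l)⁻¹ = xΓ k l ^ k * yΓ k l * zΓ k l ^ l := by
  have := PresentedGroup.mk_eq_mk_of_mul_inv_mem (rels := nilRels k l)
    (x := gt * gy * gt⁻¹) (y := gx ^ k * gy * gz ^ l) (by simp [nilRels])
  rwa [map_mul, map_mul, map_inv, map_mul, map_mul, map_zpow, map_zpow] at this

theorem commutatorElement_xΓ_yΓ : ⁅xΓ k l, yΓ k l⁆ = zΓ k l := by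
  have := PresentedGroup.mk_eq_mk_of_mul_inv_mem (rels := nilRels k l)
    (x := gx * gy * gx⁻¹ * gy⁻¹) (y := gz) (by simp [nilRels])
  rwa [map_mul, map_mul, map_mul, map_inv, map_inv] at this

theorem of_zΓ : Abelianization.of (zΓ k l) = 1 := by
  rw [← commutatorElement_xΓ_yΓ, map_commutatorElement, commutatorElement_eq_one_iff_mul_comm]
  exact mul_comm _ _

theorem of_xΓ_zpow : Abelianization.of (xΓ k l) ^ k = 1 := by
  have := congrArg Abelianization.of (tΓ_mul_yΓ_mul_inv k l)
  simpa [of_zΓ] using this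

def abelianizationGens (k : ℤ) : Fin 4 → Multiplicative (ZMod k.toNat × ℤ × ℤ) :=
  ![ofAdd (1, 0, 0), ofAdd (0, 1, 0), 1, ofAdd (0, 0, 1)]

theorem lift_abelianizationGens_nilRels (hk : 0 ≤ k) :
    ∀ r ∈ nilRels k l, FreeGroup.lift (abelianizationGens k) r = 1 := by
  have hkn : ((k : ℤ) : ZMod k.toNat) = 0 :=
    (ZMod.intCast_zmod_eq_zero_iff_dvd k k.toNat).2 (by rw [Int.toNat_of_nonneg hk])
  simp [nilRels, abelianizationGens, ← ofAdd_zsmul, ← ofAdd_neg, ← ofAdd_add, hkn]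

def abelianizationToProd (hk : 0 ≤ k) :
    Abelianization (Γ k l) →* Multiplicative (ZMod k.toNat × ℤ × ℤ) :=
  Abelianization.lift (PresentedGroup.toGroup (lift_abelianizationGens_nilRels k l hk))

@[simp] theorem abelianizationToProd_of (hk : 0 ≤ k) (i : Fin 4) :
    abelianizationToProd k l hk (Abelianization.of (PresentedGroup.of i)) =
      abelianizationGens k i := by
  simp [abelianizationToProd]

def prodToAbelianization (hk : 0 ≤ k) :
    Multiplicative (ZMod k.toNat × ℤ × ℤ) →* Abelianization (Γ k l) :=
  liftZModProdIntProdInt (Abelianization.of (xΓ k l)) (Abelianization.of (yΓ k l))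
    (Abelianization.of (tΓ k l))
    (by rw [← zpow_natCast, Int.toNat_of_nonneg hk, of_xΓ_zpow])

def abelianizationEquiv (hk : 0 ≤ k) :
    Abelianization (Γ k l) ≃* Multiplicative (ZMod k.toNat × ℤ × ℤ) :=
  MonoidHom.toMulEquiv (abelianizationToProd k l hk) (prodToAbelianization k l hk)
    (Abelianization.hom_ext _ _ <| PresentedGroup.ext fun i => by
      fin_cases i
      · simp [abelianizationGens, prodToAbelianization, xΓ]
      · simp [abelianizationGens, prodToAbelianization, yΓ]
      · simpa [abelianizationGens, zΓ] using (of_zΓ k l).symm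
      · simp [abelianizationGens, prodToAbelianization, tΓ])
    (hom_ext_zmodProdIntProdInt (by simp [prodToAbelianization, xΓ, abelianizationGens])
      (by simp [prodToAbelianization, yΓ, abelianizationGens])
      (by simp [prodToAbelianization, tΓ, abelianizationGens]))

end Presentation

/-- For integers `k ≥ 1` and `l`, the abelianization of `Γ k l` is
isomorphic to `(ℤ/kℤ) × ℤ × ℤ`, where the torsion factor `ℤ/kℤ` is generated by the class
of `x`, the two infinite cyclic factors are generated by the classes of `y` and `t`, and
the class of `z` is trivial. -/
theorem stmt8 (k l : ℤ) (hk : 1 ≤ k) :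
    ∃ e : Abelianization (Γ k l) ≃* Multiplicative (ZMod k.toNat × ℤ × ℤ),
      e (Abelianization.of (xΓ k l)) = Multiplicative.ofAdd ((1 : ZMod k.toNat), 0, 0) ∧
      e (Abelianization.of (yΓ k l)) = Multiplicative.ofAdd ((0 : ZMod k.toNat), 1, 0) ∧
      e (Abelianization.of (tΓ k l)) = Multiplicative.ofAdd ((0 : ZMod k.toNat), 0, 1) ∧
      e (Abelianization.of (zΓ k l)) = 1 := by
  have hk₀ : 0 ≤ k := zero_le_one.trans hk
  exact ⟨abelianizationEquiv k l hk₀, abelianizationToProd_of k l hk₀ 0,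
    abelianizationToProd_of k l hk₀ 1, abelianizationToProd_of k l hk₀ 3,
    abelianizationToProd_of k l hk₀ 2⟩

end Stmt8
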